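/- arXiv:1903.06209 — 2 statements merged into one kernel-verified Lean document; each statement's English description precedes it below -/
import Mathlib

section
/- Let C be a one-hole context over n variables such that no negation node occurs on the hole path of C (all nodes on the path from the root to the hole are conjunctions or disjunctions), and let ψ be any Boolean formula over n variables. Then for every assignment x ∈ {0,1}^n that is relevant for C, the value at the root equals the value at the hole: eval(C[ψ], x) = eval(ψ, x). That is, in a computation DAG with all negations pushed to the leaves, every relevant example at a node is correlated (Lemma 1 of the paper). -/
/-- Boolean formulas over `n` variables. -/
inductive BFormula (n : ℕ) : Type where
  | var : Fin n → BFormula n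
  | not : BFormula n → BFormula n
  | and : BFormula n → BFormula n → BFormula n
  | or  : BFormula n → BFormula n → BFormula n

/-- Evaluation of a Boolean formula on an assignment. -/
def BFormula.eval {n : ℕ} : BFormula n → (Fin n → Bool) → Bool
  | .var i, x => x i
  | .not φ, x => !(φ.eval x)
  | .and φ ψ, x => φ.eval x && ψ.eval x
  | .or φ ψ, x => φ.eval x || ψ.eval x

/-- One-hole contexts over `n` variables: a Boolean formula with exactly one hole. -/
inductive Ctx (n : ℕ) : Type where
  | hole : Ctx n
  | not : Ctx n → Ctx n
  | andL : Ctx n → BFormula n → Ctx n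
  | andR : BFormula n → Ctx n → Ctx n
  | orL : Ctx n → BFormula n → Ctx n
  | orR : BFormula n → Ctx n → Ctx n

/-- `C.fill ψ` replaces the hole of `C` by the formula `ψ`. -/
def Ctx.fill {n : ℕ} : Ctx n → BFormula n → BFormula n
  | .hole, ψ => ψ
  | .not C, ψ => .not (C.fill ψ)
  | .andL C φ, ψ => .and (C.fill ψ) φ
  | .andR φ C, ψ => .and φ (C.fill ψ)
  | .orL C φ, ψ => .or (C.fill ψ) φ
  | .orR φ C, ψ => .or φ (C.fill ψ)

/-- `C.evalWith h x` evaluates `C` at `x`, the hole taking the value `h x`. -/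
def Ctx.evalWith {n : ℕ} : Ctx n → ((Fin n → Bool) → Bool) → (Fin n → Bool) → Bool
  | .hole, h, x => h x
  | .not C, h, x => !(C.evalWith h x)
  | .andL C φ, h, x => C.evalWith h x && φ.eval x
  | .andR φ C, h, x => φ.eval x && C.evalWith h x
  | .orL C φ, h, x => C.evalWith h x || φ.eval x
  | .orR φ C, h, x => φ.eval x || C.evalWith h x

/-- An assignment `x` is relevant for `C` if flipping the value at the hole
flips the value at the root. -/
def Ctx.Relevant {n : ℕ} (C : Ctx n) (x : Fin n → Bool) : Prop :=
  C.evalWith (fun _ => false) x ≠ C.evalWith (fun _ => true) x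

/-- No negation node occurs on the path from the root of the context to the hole. -/
def Ctx.NoNegOnHolePath {n : ℕ} : Ctx n → Prop
  | .hole => True
  | .not _ => False
  | .andL C _ => C.NoNegOnHolePath
  | .andR _ C => C.NoNegOnHolePath
  | .orL C _ => C.NoNegOnHolePath
  | .orR _ C => C.NoNegOnHolePath

namespace Ctx

variable {n : ℕ}

theorem eval_fill (C : Ctx n) (ψ : BFormula n) (x : Fin n → Bool) :
    (C.fill ψ).eval x = C.evalWith ψ.eval x := by
  induction C <;> simp_all [fill, evalWith, BFormula.eval]

theorem evalWith_congr (C : Ctx n) {h h' : (Fin n → Bool) → Bool} {x : Fin n → Bool}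
    (hx : h x = h' x) : C.evalWith h x = C.evalWith h' x := by
  induction C <;> simp_all [evalWith]

theorem evalWith_mono {C : Ctx n} (hC : C.NoNegOnHolePath) {h h' : (Fin n → Bool) → Bool}
    {x : Fin n → Bool} (hx : h x ≤ h' x) : C.evalWith h x ≤ C.evalWith h' x := by
  induction C with
  | hole => exact hx
  | not C _ => exact hC.elim
  | andL C φ ih => exact inf_le_inf_right (φ.eval x) (ih hC)
  | andR φ C ih => exact inf_le_inf_left (φ.eval x) (ih hC)
  | orL C φ ih => exact sup_le_sup_right (ih hC) (φ.eval x)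
  | orR φ C ih => exact sup_le_sup_left (ih hC) (φ.eval x)

/-- The root value is a monotone function of the hole value, and at a relevant assignment it is
not constant; the only such function on `Bool` is the identity. -/
theorem evalWith_eq_of_relevant {C : Ctx n} (hC : C.NoNegOnHolePath)
    (h : (Fin n → Bool) → Bool) {x : Fin n → Bool} (hx : C.Relevant x) :
    C.evalWith h x = h x := by
  have hmono : C.evalWith (fun _ => false) x ≤ C.evalWith (fun _ => true) x :=
    evalWith_mono hC (Bool.false_le true)
  obtain ⟨hfalse, htrue⟩ : C.evalWith (fun _ => false) x = false ∧
      C.evalWith (fun _ => true) x = true := by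
    revert hx hmono; unfold Relevant
    generalize C.evalWith (fun _ => false) x = a; generalize C.evalWith (fun _ => true) x = b
    decide +revert
  cases hh : h x
  · exact (C.evalWith_congr hh).trans hfalse
  · exact (C.evalWith_congr hh).trans htrue

end Ctx

/-- **Lemma 1.** If all nodes on the hole path of `C` are conjunctions or disjunctions,
then for every relevant assignment `x` the value at the root equals the value at the hole:
every relevant example at the node is correlated. -/
theorem impact_relevant_examples_correlated
    (n : ℕ) (C : Ctx n) (hC : C.NoNegOnHolePath) (ψ : BFormula n)
    (x : Fin n → Bool) (hx : C.Relevant x) :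
    (C.fill ψ).eval x = ψ.eval x := by
  rw [C.eval_fill, Ctx.evalWith_eq_of_relevant hC ψ.eval hx]
end

section
/- Corollary of error accumulation: with the notation of the gate-tree setting, if T is a gate tree with N internal nodes, ε_T > 0, and for every internal node v the per-node error satisfies μ({x : h_v(val(L_v, x), val(R_v, x)) ≠ g_v(val(L_v, x), val(R_v, x))}) ≤ ε_T / N, then the learned evaluation errs at the root with probability at most ε_T: μ({x : lval(T, x) ≠ val(T, x)}) ≤ ε_T. -/
/-! The learned value at a node can only be wrong if its hypothesis gate already errs on the
true child values, or one of the children's learned values is wrong. A union bound along the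
tree therefore bounds the root error by the sum of the per-node errors, which is at most
`N · (ε_T / N) ≤ ε_T`. -/

open MeasureTheory

/-- A gate tree over `n` variables: a leaf reads an input variable; an internal node
carries a true gate `g` and a hypothesis gate `h` together with two child subtrees. -/
inductive GateTree (n : ℕ) : Type where
  | leaf : Fin n → GateTree n
  | node : (Bool → Bool → Bool) → (Bool → Bool → Bool) →
      GateTree n → GateTree n → GateTree n

/-- True evaluation: apply the true gates recursively. -/
def GateTree.val {n : ℕ} : GateTree n → (Fin n → Bool) → Bool
  | .leaf i, x => x i
  | .node g _ L R, x => g (L.val x) (R.val x)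

/-- Learned evaluation: apply the hypothesis gates recursively to the learned
values of the children. -/
def GateTree.lval {n : ℕ} : GateTree n → (Fin n → Bool) → Bool
  | .leaf i, x => x i
  | .node _ h L R, x => h (L.lval x) (R.lval x)

/-- The sum, over the internal nodes `v` of the tree, of the probability that the
hypothesis gate at `v` disagrees with the true gate at `v` on the (uncorrupted)
true values of the children. -/
noncomputable def GateTree.nodeErrSum {n : ℕ} (μ : Measure (Fin n → Bool)) :
    GateTree n → ENNReal
  | .leaf _ => 0
  | .node g h L R =>
      μ {x | h (L.val x) (R.val x) ≠ g (L.val x) (R.val x)} +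
        L.nodeErrSum μ + R.nodeErrSum μ

/-- The number of internal nodes of a gate tree. -/
def GateTree.internalCount {n : ℕ} : GateTree n → ℕ
  | .leaf _ => 0
  | .node _ _ L R => L.internalCount + R.internalCount + 1

/-- Every internal node's hypothesis gate disagrees with its true gate (on the
uncorrupted values of its children) with probability at most `ε`. -/
def GateTree.PerNodeErrLE {n : ℕ} (μ : Measure (Fin n → Bool)) (ε : ENNReal) :
    GateTree n → Prop
  | .leaf _ => True
  | .node g h L R =>
      μ {x | h (L.val x) (R.val x) ≠ g (L.val x) (R.val x)} ≤ ε ∧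
        L.PerNodeErrLE μ ε ∧ R.PerNodeErrLE μ ε

namespace GateTree

variable {n : ℕ}

lemma setOf_lval_ne_val_node_subset (g h : Bool → Bool → Bool) (L R : GateTree n) :
    {x | (node g h L R).lval x ≠ (node g h L R).val x} ⊆
      {x | h (L.val x) (R.val x) ≠ g (L.val x) (R.val x)} ∪ {x | L.lval x ≠ L.val x} ∪
        {x | R.lval x ≠ R.val x} := by
  intro x hx
  by_contra hgood
  simp only [Set.mem_union, Set.mem_ofPred_eq, not_or, not_not] at hgood
  obtain ⟨⟨hgate, hL⟩, hR⟩ := hgood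
  exact hx (by simp only [lval, val, hL, hR, hgate])

lemma measure_lval_ne_val_le_nodeErrSum (μ : Measure (Fin n → Bool)) (T : GateTree n) :
    μ {x | T.lval x ≠ T.val x} ≤ T.nodeErrSum μ := by
  induction T with
  | leaf i => simp [lval, val]
  | node g h L R ihL ihR =>
    calc μ {x | (node g h L R).lval x ≠ (node g h L R).val x}
        ≤ μ ({x | h (L.val x) (R.val x) ≠ g (L.val x) (R.val x)} ∪ {x | L.lval x ≠ L.val x} ∪
            {x | R.lval x ≠ R.val x}) := measure_mono (setOf_lval_ne_val_node_subset g h L R)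
      _ ≤ μ {x | h (L.val x) (R.val x) ≠ g (L.val x) (R.val x)} + μ {x | L.lval x ≠ L.val x} +
            μ {x | R.lval x ≠ R.val x} :=
        (measure_union_le _ _).trans (add_le_add_left (measure_union_le _ _) _)
      _ ≤ (node g h L R).nodeErrSum μ := by
        simp only [nodeErrSum]
        gcongr

lemma nodeErrSum_le_internalCount_mul {μ : Measure (Fin n → Bool)} {ε : ENNReal}
    {T : GateTree n} (hT : T.PerNodeErrLE μ ε) :
    T.nodeErrSum μ ≤ T.internalCount * ε := by
  induction T with
  | leaf i => simp [nodeErrSum]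
  | node g h L R ihL ihR =>
    obtain ⟨hgate, hL, hR⟩ := hT
    calc (node g h L R).nodeErrSum μ ≤ ε + L.internalCount * ε + R.internalCount * ε :=
          add_le_add (add_le_add hgate (ihL hL)) (ihR hR)
      _ = (node g h L R).internalCount * ε := by
        simp only [internalCount]
        push_cast
        ring

end GateTree

theorem impact_gate_tree_error_corollary_general
    (n : ℕ) (μ : Measure (Fin n → Bool))
    (T : GateTree n) (εT : ENNReal)
    (hnode : T.PerNodeErrLE μ (εT / (T.internalCount : ENNReal))) :
    μ {x | T.lval x ≠ T.val x} ≤ εT :=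
  calc μ {x | T.lval x ≠ T.val x} ≤ T.nodeErrSum μ := T.measure_lval_ne_val_le_nodeErrSum μ
    _ ≤ T.internalCount * (εT / T.internalCount) := GateTree.nodeErrSum_le_internalCount_mul hnode
    _ ≤ εT := ENNReal.mul_div_le

/-- **Corollary of error accumulation.** If a gate tree has `N` internal nodes and
the per-node error at every internal node is at most `ε_T / N`, then the learned
evaluation errs at the root with probability at most `ε_T`. -/
theorem impact_gate_tree_error_corollary
    (n : ℕ) (μ : Measure (Fin n → Bool)) [IsProbabilityMeasure μ]
    (T : GateTree n) (εT : ENNReal) (hε : 0 < εT)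
    (hnode : T.PerNodeErrLE μ (εT / (T.internalCount : ENNReal))) :
    μ {x | T.lval x ≠ T.val x} ≤ εT :=
  impact_gate_tree_error_corollary_general n μ T εT hnode
end
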